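/- Let n ≥ 3 and let Q be the n²×n² permutation matrix determined by Q·e_{(i−1)n+j} = e_{(j−1)n+i} for 1 ≤ i,j ≤ n (the commutation/vec-permutation matrix, satisfying [QᵀAQ]_{(i,j),(k,l)} = [A]_{(k,l),(i,j)} for block indexing). For an n²×n² real matrix A with n×n blocks A_{k,l}, let ŝ₁(A) be the matrix obtained by replacing each block A_{k,l} by ŝ(A_{k,l}), and define ŝ₂(A) := Q·ŝ₁(Qᵀ·ŝ₁(A)·Q)·Qᵀ. Then ŝ₂(A) is the Frobenius-optimal approximation of A from the tensor algebra {(Ŝ_n ⊗ Ŝ_n)Λ(Ŝ_n ⊗ Ŝ_n) : Λ real diagonal of order n²}; that is, ‖ŝ₂(A) − A‖_F ≤ ‖B − A‖_F for every B in that algebra, and ŝ₂(A) belongs to it. -/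

import Mathlib

open Matrix Kronecker

/-- The sine transform matrix of type I: `(S_m)_{ij} = sqrt(2/(m+1))·sin(ijπ/(m+1))`
for `1 ≤ i,j ≤ m` (indexed here by `Fin m`, i.e. with indices shifted by one). -/
noncomputable def sineMat (m : ℕ) : Matrix (Fin m) (Fin m) ℝ :=
  Matrix.of fun i j =>
    Real.sqrt (2 / (m + 1)) *
      Real.sin ((((i : ℕ) : ℝ) + 1) * (((j : ℕ) : ℝ) + 1) * Real.pi / (m + 1))

/-- `Ŝ_n = diag(1, S_{n-2}, 1)`. -/
noncomputable def Shat (n : ℕ) : Matrix (Fin n) (Fin n) ℝ :=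
  Matrix.of fun i j =>
    if (i : ℕ) = 0 ∧ (j : ℕ) = 0 then 1
    else if (i : ℕ) = n - 1 ∧ (j : ℕ) = n - 1 then 1
    else if h : 0 < (i : ℕ) ∧ (i : ℕ) < n - 1 ∧ 0 < (j : ℕ) ∧ (j : ℕ) < n - 1 then
      sineMat (n - 2) ⟨(i : ℕ) - 1, by omega⟩ ⟨(j : ℕ) - 1, by omega⟩
    else 0

/-- The Frobenius norm of a real matrix. -/
noncomputable def frob {ι κ : Type*} [Fintype ι] [Fintype κ] (A : Matrix ι κ ℝ) : ℝ :=
  Real.sqrt (∑ i, ∑ j, (A i j) ^ 2)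

/-- `ŝ(M) = Ŝ_n·diag(Ŝ_n M Ŝ_n)·Ŝ_n`: the Frobenius-optimal approximation of `M` from
`τ̂ = {Ŝ_n Λ Ŝ_n : Λ real diagonal}`. -/
noncomputable def sOptHat (n : ℕ) (M : Matrix (Fin n) (Fin n) ℝ) : Matrix (Fin n) (Fin n) ℝ :=
  Shat n * Matrix.diagonal (Matrix.diag (Shat n * M * Shat n)) * Shat n

/-- The commutation (vec-permutation) matrix `Q` with `Q e_{(i,j)} = e_{(j,i)}`, i.e.
`Q e_{(i-1)n+j} = e_{(j-1)n+i}` in 1-based linear indexing; `n²×n²` indices are pairs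
`(block index, within-block index)`, consistent with the Kronecker product. -/
def Qperm (n : ℕ) : Matrix (Fin n × Fin n) (Fin n × Fin n) ℝ :=
  Matrix.of fun a b => if a = b.swap then 1 else 0

/-- The `(k,l)`-th `n×n` block of an `n²×n²` matrix. -/
def blockOf {n : ℕ} (A : Matrix (Fin n × Fin n) (Fin n × Fin n) ℝ) (k l : Fin n) :
    Matrix (Fin n) (Fin n) ℝ :=
  Matrix.of fun i j => A (k, i) (l, j)

/-- The Level-1 preconditioner `ŝ₁(A)`: replace each `n×n` block `A_{k,l}` by `ŝ(A_{k,l})`. -/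
noncomputable def sHat1 {n : ℕ} (A : Matrix (Fin n × Fin n) (Fin n × Fin n) ℝ) :
    Matrix (Fin n × Fin n) (Fin n × Fin n) ℝ :=
  Matrix.of fun a b => sOptHat n (blockOf A a.1 b.1) a.2 b.2

/-- The Level-2 preconditioner `ŝ₂(A) = Q·ŝ₁(Qᵀ·ŝ₁(A)·Q)·Qᵀ`. -/
noncomputable def sHat2 {n : ℕ} (A : Matrix (Fin n × Fin n) (Fin n × Fin n) ℝ) :
    Matrix (Fin n × Fin n) (Fin n × Fin n) ℝ :=
  Qperm n * sHat1 ((Qperm n)ᵀ * sHat1 A * Qperm n) * (Qperm n)ᵀ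


section Aux

open Complex Finset in

open Complex Finset in
lemma cos_re_exp (x : ℝ) : Real.cos x = (Complex.exp ((x:ℂ) * I)).re := by
  rw [Complex.exp_mul_I]
  simp [Complex.cos_ofReal_re]

open Complex Finset in
lemma sum_cos_eq (θ : ℝ) (N : ℕ) (hz : Complex.exp (θ * I) ≠ 1) :
    ∑ k ∈ range N, Real.cos (k * θ)
      = (((Complex.exp (θ * I)) ^ N - 1) / (Complex.exp (θ * I) - 1)).re := by
  have h1 : ∀ k : ℕ, Real.cos (k * θ) = ((Complex.exp (θ * I)) ^ k).re := by
    intro k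
    rw [← Complex.exp_nat_mul, cos_re_exp]
    congr 2
    push_cast; ring
  simp_rw [h1]
  rw [← Complex.re_sum]
  congr 1
  rw [geom_sum_eq hz]

open Complex Finset in
lemma re_div_sub_one (z : ℂ) (c : ℝ) :
    ((c : ℂ) / (z - 1)).re = c * (z.re - 1) / Complex.normSq (z - 1) := by
  rw [Complex.div_re]
  have h2 : (z - 1).re = z.re - 1 := by simp
  have h3 : ((c:ℂ)).re = c := by simp
  have h4 : ((c:ℂ)).im = 0 := by simp
  rw [h2, h3, h4]
  ring

open Complex Finset in
lemma exp_ne_one_of (r : ℤ) (N : ℕ) (hN : 0 < N) (hr0 : r ≠ 0) (hr : r.natAbs < 2 * N) :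
    Complex.exp (((r * Real.pi / N : ℝ) : ℂ) * I) ≠ 1 := by
  intro h
  rw [Complex.exp_eq_one_iff] at h
  obtain ⟨k, hk⟩ := h
  have hI : ((r * Real.pi / N : ℝ) : ℂ) = (k : ℂ) * (2 * Real.pi) := by
    refine mul_right_cancel₀ Complex.I_ne_zero ?_
    rw [hk]; ring
  have hre : (r * Real.pi / N : ℝ) = (k : ℝ) * (2 * Real.pi) := by
    exact_mod_cast hI
  have hNne : (N : ℝ) ≠ 0 := Nat.cast_ne_zero.mpr hN.ne'
  have hr2 : (r : ℝ) = (k : ℝ) * (2 * N) := by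
    have hpi := Real.pi_pos
    field_simp at hre
    nlinarith [hre]
  have hrz : r = k * (2 * N) := by exact_mod_cast hr2
  rcases eq_or_ne k 0 with h0 | h0
  · exact hr0 (by simp [hrz, h0])
  · have : (2 * N : ℤ) ≤ |r| := by
      rw [hrz, abs_mul]
      have h1 : (1:ℤ) ≤ |k| := Int.one_le_abs h0
      have h2 : |(2*(N:ℤ))| = 2*(N:ℤ) := abs_of_nonneg (by positivity)
      nlinarith [abs_nonneg k]
    rw [Int.abs_eq_natAbs] at this
    omega

open Complex Finset in
lemma sum_cos_val (r : ℤ) (N : ℕ) (hN : 0 < N) (hr0 : r ≠ 0) (hr : r.natAbs < 2 * N) :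
    ∑ k ∈ range N, Real.cos (k * (r * Real.pi / N)) = if Even r then 0 else 1 := by
  set θ : ℝ := r * Real.pi / N with hθ
  have hz : Complex.exp ((θ:ℂ) * I) ≠ 1 := exp_ne_one_of r N hN hr0 hr
  set z : ℂ := Complex.exp ((θ:ℂ) * I) with hzdef
  have hNne : (N : ℝ) ≠ 0 := Nat.cast_ne_zero.mpr hN.ne'
  have hzN : z ^ N = (-1 : ℂ) ^ r := by
    rw [hzdef, ← Complex.exp_nat_mul]
    have : (N : ℂ) * ((θ:ℂ) * I) = (r:ℂ) * (Real.pi * I) := by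
      have hNC : (N:ℂ) ≠ 0 := Nat.cast_ne_zero.mpr hN.ne'
      rw [hθ]; push_cast; field_simp
    rw [this, Complex.exp_int_mul, Complex.exp_pi_mul_I]
  have habs : Complex.normSq z = 1 := by
    rw [← Complex.sq_norm, hzdef, Complex.norm_exp_ofReal_mul_I]; norm_num
  have hns : Complex.normSq (z - 1) = -2 * (z.re - 1) := by
    rw [Complex.normSq_apply]
    have h1 : (z-1).re = z.re - 1 := by simp
    have h2 : (z-1).im = z.im := by simp
    rw [h1, h2]
    have : z.re * z.re + z.im * z.im = 1 := by rw [← Complex.normSq_apply, habs]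
    nlinarith [this]
  have hnsne : Complex.normSq (z - 1) ≠ 0 := by
    intro h
    exact hz (sub_eq_zero.mp (Complex.normSq_eq_zero.mp h))
  rw [sum_cos_eq θ N hz, ← hzdef, hzN]
  rcases Int.even_or_odd r with he | ho
  · rw [he.neg_one_zpow]
    simp [if_pos he]
  · rw [Odd.neg_one_zpow ho]
    rw [if_neg (Int.not_even_iff_odd.mpr ho)]
    have h0 : ((-1 : ℂ) - 1) = ((-2 : ℝ) : ℂ) := by norm_num
    have h2 : (-2:ℝ) * (z.re - 1) ≠ 0 := hns ▸ hnsne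
    rw [h0, re_div_sub_one, hns]
    exact div_self h2

open Complex Finset in
lemma sin_orth (N : ℕ) (hN : 0 < N) (a b : ℕ) (ha : 0 < a) (ha' : a < N) (hb : 0 < b)
    (hb' : b < N) :
    ∑ k ∈ range N, Real.sin (a * k * Real.pi / N) * Real.sin (b * k * Real.pi / N)
      = if a = b then (N : ℝ) / 2 else 0 := by
  have key : ∀ k : ℕ, Real.sin (a * k * Real.pi / N) * Real.sin (b * k * Real.pi / N)
      = (Real.cos ((k:ℝ) * (((a:ℤ) - b : ℤ) * Real.pi / N))
        - Real.cos ((k:ℝ) * (((a:ℤ) + b : ℤ) * Real.pi / N))) / 2 := by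
    intro k
    have e1 : ((k:ℝ) * ((((a:ℤ) - b : ℤ):ℝ) * Real.pi / N)
        + (k:ℝ) * ((((a:ℤ) + b : ℤ):ℝ) * Real.pi / N))/2 = a * k * Real.pi / N := by
      push_cast; ring
    have e2 : ((k:ℝ) * ((((a:ℤ) - b : ℤ):ℝ) * Real.pi / N)
        - (k:ℝ) * ((((a:ℤ) + b : ℤ):ℝ) * Real.pi / N))/2 = -(b * k * Real.pi / N) := by
      push_cast; ring
    rw [Real.cos_sub_cos, e1, e2, Real.sin_neg]
    ring
  simp_rw [key]
  rw [← Finset.sum_div, Finset.sum_sub_distrib]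
  rcases eq_or_ne a b with he | hne
  · subst he
    have h1 : ∀ k ∈ range N, Real.cos ((k:ℝ) * (((a:ℤ) - a : ℤ) * Real.pi / N)) = 1 := by
      intro k _; simp
    rw [Finset.sum_congr rfl h1]
    have h2 : ((a:ℤ) + a) = (2 * a : ℤ) := by ring
    rw [h2, sum_cos_val (2*a) N hN (by positivity) (by simp [Int.natAbs_mul]; omega)]
    have : Even (2 * (a:ℤ)) := even_two_mul _
    rw [if_pos this, if_pos rfl]
    simp
  · have hr1 : ((a:ℤ) - b) ≠ 0 := by
      intro h; apply hne; omega
    have hr1' : ((a:ℤ) - b).natAbs < 2 * N := by omega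
    have hr2 : ((a:ℤ) + b) ≠ 0 := by positivity
    have hr2' : ((a:ℤ) + b).natAbs < 2 * N := by omega
    rw [sum_cos_val _ N hN hr1 hr1', sum_cos_val _ N hN hr2 hr2']
    have hpar : Even ((a:ℤ) - b) ↔ Even ((a:ℤ) + b) := by
      constructor
      · rintro ⟨c, hc⟩; exact ⟨c + b, by omega⟩
      · rintro ⟨c, hc⟩; exact ⟨c - b, by omega⟩
    rw [if_neg hne]
    by_cases hE : Even ((a:ℤ) - b)
    · rw [if_pos hE, if_pos (hpar.mp hE)]; ring
    · rw [if_neg hE, if_neg (fun h => hE (hpar.mpr h))]; ring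

lemma sineMat_symm (m : ℕ) (i j : Fin m) : sineMat m i j = sineMat m j i := by
  simp only [sineMat, Matrix.of_apply]
  ring_nf

lemma sineMat_mul_self (m : ℕ) : sineMat m * sineMat m = 1 := by
  ext i j
  rw [Matrix.mul_apply]
  simp only [sineMat, Matrix.of_apply]
  set N := m + 1 with hNdef
  set a := (i:ℕ) + 1 with hadef
  set b := (j:ℕ) + 1 with hbdef
  set f : ℕ → ℝ := fun k =>
    Real.sin ((a:ℝ) * k * Real.pi / N) * Real.sin ((b:ℝ) * k * Real.pi / N) with hfdef
  have hsq : Real.sqrt (2 / (N:ℝ)) * Real.sqrt (2 / (N:ℝ)) = 2 / N := by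
    rw [Real.mul_self_sqrt (by positivity)]
  have hterm : ∀ k : Fin m,
      (Real.sqrt (2 / ((m:ℝ)+1)) * Real.sin ((((i:ℕ):ℝ)+1) * (((k:ℕ):ℝ)+1) * Real.pi / ((m:ℝ)+1)))
        * (Real.sqrt (2 / ((m:ℝ)+1)) * Real.sin ((((k:ℕ):ℝ)+1) * (((j:ℕ):ℝ)+1) * Real.pi / ((m:ℝ)+1)))
      = (2 / N) * f ((k:ℕ) + 1) := by
    intro k
    rw [hfdef]
    simp only [hadef, hbdef, hNdef]
    push_cast
    have hsq' : Real.sqrt (2/((m:ℝ)+1)) * Real.sqrt (2/((m:ℝ)+1)) = 2/((m:ℝ)+1) :=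
      Real.mul_self_sqrt (by positivity)
    rw [← hsq']
    ring_nf
    rw [Real.sqrt_sq (Real.sqrt_nonneg _)]
  simp_rw [hterm]
  rw [← Finset.mul_sum]
  have hshift : ∑ k : Fin m, f ((k:ℕ) + 1) = ∑ k ∈ Finset.range N, f k := by
    rw [Fin.sum_univ_eq_sum_range (fun k => f (k + 1)) m, hNdef,
      Finset.sum_range_succ' f m]
    have : f 0 = 0 := by simp [hfdef]
    rw [this, add_zero]
  rw [hshift, hfdef]
  have horth := sin_orth N (by omega) a b (by omega) (by omega) (by omega) (by omega)
  rw [horth]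
  by_cases h : a = b
  · have hij : i = j := by ext; omega
    rw [if_pos h, hij, Matrix.one_apply_eq]
    field_simp
    exact div_self (by rw [hNdef]; positivity)
  · have hij : i ≠ j := fun hh => h (by rw [hadef, hbdef, hh])
    rw [if_neg h, Matrix.one_apply_ne hij, mul_zero]

lemma sum_fin_split (m : ℕ) (g : Fin (m + 2) → ℝ) :
    ∑ k, g k = g ⟨0, by omega⟩ + g ⟨m + 1, by omega⟩
      + ∑ k : Fin m, g ⟨(k : ℕ) + 1, by omega⟩ := by
  set G : ℕ → ℝ := fun t => if h : t < m + 2 then g ⟨t, h⟩ else 0 with hG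
  have hg : ∀ k : Fin (m + 2), g k = G (k : ℕ) := by
    intro k; rw [hG]; simp [k.isLt]
  simp_rw [hg]
  rw [Fin.sum_univ_eq_sum_range G (m + 2), Finset.sum_range_succ, Finset.sum_range_succ',
    Fin.sum_univ_eq_sum_range (fun t => G (t + 1)) m]
  push_cast
  ring

lemma Shat_left0 {n : ℕ} (hn : 3 ≤ n) (i j : Fin n) (hi : (i : ℕ) = 0) :
    Shat n i j = if (j : ℕ) = 0 then 1 else 0 := by
  simp only [Shat, Matrix.of_apply]
  by_cases hj : (j : ℕ) = 0
  · simp [hi, hj]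
  · rw [if_neg (by omega), if_neg (by omega), dif_neg (by omega), if_neg hj]

lemma Shat_leftn {n : ℕ} (hn : 3 ≤ n) (i j : Fin n) (hi : (i : ℕ) = n - 1) :
    Shat n i j = if (j : ℕ) = n - 1 then 1 else 0 := by
  simp only [Shat, Matrix.of_apply]
  by_cases hj : (j : ℕ) = n - 1
  · rw [if_neg (by omega), if_pos ⟨hi, hj⟩, if_pos hj]
  · rw [if_neg (by omega), if_neg (by omega), dif_neg (by omega), if_neg hj]

lemma Shat_mid {n : ℕ} (hn : 3 ≤ n) (i j : Fin n) (hi : 0 < (i:ℕ) ∧ (i:ℕ) < n - 1) :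
    Shat n i j = if hj : 0 < (j:ℕ) ∧ (j:ℕ) < n - 1 then
      sineMat (n - 2) ⟨(i : ℕ) - 1, by omega⟩ ⟨(j : ℕ) - 1, by omega⟩ else 0 := by
  simp only [Shat, Matrix.of_apply]
  rw [if_neg (by omega), if_neg (by omega)]
  by_cases hj : 0 < (j:ℕ) ∧ (j:ℕ) < n - 1
  · rw [dif_pos ⟨hi.1, hi.2, hj⟩, dif_pos hj]
  · rw [dif_neg (by omega), dif_neg hj]


lemma Shat_mid' (m : ℕ) (i j : Fin (m+2)) (hi : 0 < (i:ℕ) ∧ (i:ℕ) < m+1)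
    (hj : 0 < (j:ℕ) ∧ (j:ℕ) < m+1) :
    Shat (m+2) i j = sineMat m ⟨(i:ℕ) - 1, by omega⟩ ⟨(j:ℕ) - 1, by omega⟩ := by
  simp only [Shat, Matrix.of_apply]
  rw [if_neg (by omega), if_neg (by omega), dif_pos (by omega)]
  rfl

lemma Shat_mid0 (m : ℕ) (i j : Fin (m+2)) (hi : 0 < (i:ℕ) ∧ (i:ℕ) < m+1)
    (hj : ¬(0 < (j:ℕ) ∧ (j:ℕ) < m+1)) :
    Shat (m+2) i j = 0 := by
  simp only [Shat, Matrix.of_apply]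
  rw [if_neg (by omega), if_neg (by omega), dif_neg (by omega)]

lemma Shat_symm (n : ℕ) (hn : 3 ≤ n) : (Shat n)ᵀ = Shat n := by
  ext i j
  rw [Matrix.transpose_apply]
  rcases Nat.lt_or_ge 0 (j:ℕ) with hj0 | hj0
  · rcases Nat.lt_or_ge (j:ℕ) (n-1) with hj1 | hj1
    · rw [Shat_mid hn j i ⟨hj0, hj1⟩]
      by_cases hi : 0 < (i:ℕ) ∧ (i:ℕ) < n - 1
      · rw [dif_pos hi, Shat_mid hn i j hi, dif_pos ⟨hj0, hj1⟩, sineMat_symm]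
      · rw [dif_neg hi]
        rcases Nat.lt_or_ge 0 (i:ℕ) with hi0 | hi0
        · rw [Shat_leftn hn i j (by omega), if_neg (by omega)]
        · rw [Shat_left0 hn i j (by omega), if_neg (by omega)]
    · rw [Shat_leftn hn j i (by omega)]
      rcases Nat.lt_or_ge 0 (i:ℕ) with hi0 | hi0
      · rcases Nat.lt_or_ge (i:ℕ) (n-1) with hi1 | hi1
        · rw [Shat_mid hn i j ⟨hi0, hi1⟩, dif_neg (by omega), if_neg (by omega)]
        · rw [Shat_leftn hn i j (by omega), if_pos (by omega), if_pos (by omega)]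
      · rw [Shat_left0 hn i j (by omega), if_neg (by omega), if_neg (by omega)]
  · rw [Shat_left0 hn j i (by omega)]
    rcases Nat.lt_or_ge 0 (i:ℕ) with hi0 | hi0
    · rcases Nat.lt_or_ge (i:ℕ) (n-1) with hi1 | hi1
      · rw [Shat_mid hn i j ⟨hi0, hi1⟩, dif_neg (by omega), if_neg (by omega)]
      · rw [Shat_leftn hn i j (by omega), if_neg (by omega), if_neg (by omega)]
    · rw [Shat_left0 hn i j (by omega), if_pos (by omega), if_pos (by omega)]

lemma Shat_mul_self (n : ℕ) (hn : 3 ≤ n) : Shat n * Shat n = 1 := by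
  obtain ⟨m, rfl⟩ : ∃ m, n = m + 2 := ⟨n - 2, by omega⟩
  ext i j
  rw [Matrix.mul_apply, Matrix.one_apply, sum_fin_split m]
  rcases Nat.lt_or_ge 0 (i:ℕ) with hi0 | hi0
  · rcases Nat.lt_or_ge (i:ℕ) (m+1) with hi1 | hi1
    · -- middle row: boundary terms vanish
      have hb0 : Shat (m+2) i ⟨0, by omega⟩ = 0 :=
        Shat_mid0 m i _ ⟨hi0, hi1⟩ (by simp)
      have hbn : Shat (m+2) i ⟨m+1, by omega⟩ = 0 :=
        Shat_mid0 m i _ ⟨hi0, hi1⟩ (by simp)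
      rw [hb0, hbn, zero_mul, zero_mul, zero_add, zero_add]
      rcases Nat.lt_or_ge 0 (j:ℕ) with hj0 | hj0
      · rcases Nat.lt_or_ge (j:ℕ) (m+1) with hj1 | hj1
        · have hterm : ∀ k : Fin m,
              Shat (m+2) i ⟨(k:ℕ)+1, by omega⟩ * Shat (m+2) ⟨(k:ℕ)+1, by omega⟩ j
              = sineMat m ⟨(i:ℕ)-1, by omega⟩ k * sineMat m k ⟨(j:ℕ)-1, by omega⟩ := by
            intro k
            rw [Shat_mid' m i ⟨(k:ℕ)+1, by omega⟩ ⟨hi0, hi1⟩ (by simp only [Fin.val_mk]; omega),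
              Shat_mid' m ⟨(k:ℕ)+1, by omega⟩ j (by simp only [Fin.val_mk]; omega) ⟨hj0, hj1⟩]
            have e : ((⟨(k:ℕ)+1, by omega⟩ : Fin (m+2)) : ℕ) - 1 = (k:ℕ) := by simp
            congr 1 <;> · congr 1; exact e ▸ rfl
          simp_rw [hterm]
          rw [← Matrix.mul_apply, sineMat_mul_self, Matrix.one_apply]
          by_cases hij : i = j
          · rw [if_pos (show _ by cases hij; rfl), if_pos hij]
          · rw [if_neg, if_neg hij]
            intro h
            apply hij
            simp only [Fin.mk.injEq] at h
            ext
            omega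
        · have hterm : ∀ k : Fin m,
              Shat (m+2) i ⟨(k:ℕ)+1, by omega⟩ * Shat (m+2) ⟨(k:ℕ)+1, by omega⟩ j = 0 := by
            intro k
            rw [Shat_mid0 m ⟨(k:ℕ)+1, by omega⟩ j (by simp only [Fin.val_mk]; omega) (by omega), mul_zero]
          simp_rw [hterm]
          rw [Finset.sum_const_zero, if_neg (by intro h; rw [h] at hi1; omega)]
      · have hterm : ∀ k : Fin m,
            Shat (m+2) i ⟨(k:ℕ)+1, by omega⟩ * Shat (m+2) ⟨(k:ℕ)+1, by omega⟩ j = 0 := by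
          intro k
          rw [Shat_mid0 m ⟨(k:ℕ)+1, by omega⟩ j (by simp only [Fin.val_mk]; omega) (by omega), mul_zero]
        simp_rw [hterm]
        rw [Finset.sum_const_zero, if_neg (by intro h; rw [h] at hi0; omega)]
    · -- last row
      have hn' : (3:ℕ) ≤ m + 2 := by omega
      have h1 : m + 2 - 1 = m + 1 := by omega
      have hb0 : Shat (m+2) i ⟨0, by omega⟩ = 0 := by
        rw [Shat_leftn hn' i _ (by omega), if_neg (by simp [h1])]
      have hmidk : ∀ k : Fin m, Shat (m+2) i ⟨(k:ℕ)+1, by omega⟩ = 0 := by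
        intro k
        rw [Shat_leftn hn' i _ (by omega), if_neg (by simp [h1]; omega)]
      have hbn : Shat (m+2) i ⟨m+1, by omega⟩ = 1 := by
        rw [Shat_leftn hn' i _ (by omega), if_pos (by simp [h1])]
      simp_rw [hb0, hbn, hmidk, zero_mul, Finset.sum_const_zero, add_zero, zero_add, one_mul]
      rw [Shat_leftn hn' ⟨m+1, by omega⟩ j (by simp [h1])]
      by_cases hij : i = j
      · rw [if_pos (by rw [← hij]; omega), if_pos hij]
      · rw [if_neg (by intro h; apply hij; ext; omega), if_neg hij]
  · -- first row
    have hn' : (3:ℕ) ≤ m + 2 := by omega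
    have hi : (i:ℕ) = 0 := by omega
    have hbn : Shat (m+2) i ⟨m+1, by omega⟩ = 0 := by
      rw [Shat_left0 hn' i _ hi, if_neg (by simp)]
    have hmidk : ∀ k : Fin m, Shat (m+2) i ⟨(k:ℕ)+1, by omega⟩ = 0 := by
      intro k
      rw [Shat_left0 hn' i _ hi, if_neg (by simp)]
    have hb0 : Shat (m+2) i ⟨0, by omega⟩ = 1 := by
      rw [Shat_left0 hn' i _ hi, if_pos (by simp)]
    simp_rw [hb0, hbn, hmidk, zero_mul, Finset.sum_const_zero, add_zero, one_mul]
    rw [Shat_left0 hn' ⟨0, by omega⟩ j (by simp)]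
    by_cases hij : i = j
    · rw [if_pos (by rw [← hij]; omega), if_pos hij]
    · rw [if_neg (by intro h; apply hij; ext; omega), if_neg hij]

-- Qperm lemmas
lemma Qperm_transpose (n : ℕ) : (Qperm n)ᵀ = Qperm n := by
  ext a b
  simp only [Matrix.transpose_apply, Qperm, Matrix.of_apply]
  congr 1
  simp only [eq_iff_iff]
  constructor <;> intro h <;> simp [h]

lemma Qperm_mul {n : ℕ} (M : Matrix (Fin n × Fin n) (Fin n × Fin n) ℝ) (a b : Fin n × Fin n) :
    (Qperm n * M) a b = M a.swap b := by
  rw [Matrix.mul_apply]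
  rw [Finset.sum_eq_single a.swap]
  · simp [Qperm]
  · intro c _ hc
    rw [Qperm, Matrix.of_apply, if_neg, zero_mul]
    intro h
    exact hc (by simp [h])
  · intro h; exact absurd (Finset.mem_univ _) h

lemma mul_Qperm {n : ℕ} (M : Matrix (Fin n × Fin n) (Fin n × Fin n) ℝ) (a b : Fin n × Fin n) :
    (M * Qperm n) a b = M a b.swap := by
  rw [Matrix.mul_apply]
  rw [Finset.sum_eq_single b.swap]
  · simp [Qperm]
  · intro c _ hc
    rw [Qperm, Matrix.of_apply, if_neg hc, mul_zero]
  · intro h; exact absurd (Finset.mem_univ _) h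

-- entrywise formula for sOptHat
lemma sOptHat_apply (n : ℕ) (M : Matrix (Fin n) (Fin n) ℝ) (i j : Fin n) :
    sOptHat n M i j
      = ∑ p, ∑ a, ∑ c, Shat n i p * Shat n p a * M a c * Shat n c p * Shat n p j := by
  rw [sOptHat, Matrix.mul_apply]
  simp_rw [Matrix.mul_diagonal, Matrix.diag, Matrix.mul_apply, Finset.sum_mul,
    Finset.mul_sum]
  refine Finset.sum_congr rfl fun p _ => ?_
  rw [Finset.sum_mul]
  simp_rw [Finset.sum_mul]
  rw [Finset.sum_comm]
  refine Finset.sum_congr rfl fun a _ => Finset.sum_congr rfl fun c _ => by ring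

lemma sum_rot3 {M : Type*} [AddCommMonoid M] {ι : Type*} [Fintype ι]
    (f : ι → ι → ι → M) :
    ∑ a, ∑ c, ∑ q, f a c q = ∑ q, ∑ a, ∑ c, f a c q :=
  (Finset.sum_congr rfl fun _ _ => Finset.sum_comm).trans Finset.sum_comm

lemma sum_reorder5 {M : Type*} [AddCommMonoid M] {ι : Type*} [Fintype ι]
    (f : ι → ι → ι → ι → ι → M) :
    ∑ a, ∑ c, ∑ q, ∑ b, ∑ e, f a c q b e
      = ∑ q, ∑ a, ∑ b, ∑ c, ∑ e, f a c q b e := by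
  rw [sum_rot3 (fun a c q => ∑ b, ∑ e, f a c q b e)]
  exact Finset.sum_congr rfl fun q _ => Finset.sum_congr rfl fun a _ => Finset.sum_comm

lemma sum_reorder_final {M : Type*} [AddCommMonoid M] {ι : Type*} [Fintype ι]
    (f : ι → ι → ι → ι → ι → M) :
    ∑ a, ∑ c, ∑ q, ∑ b, ∑ e, f a c q b e
      = ∑ q, ∑ c, ∑ e, ∑ a, ∑ b, f a c q b e :=
  calc ∑ a, ∑ c, ∑ q, ∑ b, ∑ e, f a c q b e
      = ∑ a, ∑ c, ∑ q, ∑ e, ∑ b, f a c q b e :=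
        Finset.sum_congr rfl fun a _ => Finset.sum_congr rfl fun c _ =>
          Finset.sum_congr rfl fun q _ => Finset.sum_comm
    _ = ∑ q, ∑ a, ∑ c, ∑ e, ∑ b, f a c q b e :=
        sum_rot3 (fun a c q => ∑ e, ∑ b, f a c q b e)
    _ = ∑ q, ∑ e, ∑ a, ∑ c, ∑ b, f a c q b e :=
        Finset.sum_congr rfl fun q _ => sum_rot3 (fun a c e => ∑ b, f a c q b e)
    _ = ∑ q, ∑ c, ∑ e, ∑ a, ∑ b, f a c q b e :=
        Finset.sum_congr rfl fun q _ => sum_rot3 (fun e a c => ∑ b, f a c q b e)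

-- LHS entrywise
lemma sHat2_apply (n : ℕ) (A : Matrix (Fin n × Fin n) (Fin n × Fin n) ℝ)
    (k i l j : Fin n) :
    sHat2 A (k, i) (l, j)
      = ∑ p, ∑ a, ∑ c, ∑ q, ∑ b, ∑ e,
          Shat n k p * Shat n p a * (Shat n i q * Shat n q b * A (a, b) (c, e)
            * Shat n e q * Shat n q j) * Shat n c p * Shat n p l := by
  rw [sHat2, Qperm_transpose, Matrix.mul_assoc, Qperm_mul, mul_Qperm]
  simp only [Prod.swap_prod_mk]
  simp only [sHat1, Matrix.of_apply]
  rw [sOptHat_apply]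
  simp only [mul_Qperm, Qperm_mul, Prod.swap_prod_mk, blockOf, Matrix.of_apply,
    sOptHat_apply]
  simp_rw [Finset.mul_sum]
  simp_rw [Finset.sum_mul]

-- structural identity
lemma sHat2_eq (n : ℕ) (A : Matrix (Fin n × Fin n) (Fin n × Fin n) ℝ) :
    sHat2 A = (Shat n ⊗ₖ Shat n)
      * Matrix.diagonal (Matrix.diag ((Shat n ⊗ₖ Shat n) * A * (Shat n ⊗ₖ Shat n)))
      * (Shat n ⊗ₖ Shat n) := by
  ext x y
  obtain ⟨k, i⟩ := x
  obtain ⟨l, j⟩ := y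
  rw [sHat2_apply, Matrix.mul_apply]
  simp_rw [Matrix.mul_diagonal, Matrix.diag, Matrix.mul_apply, Matrix.kroneckerMap_apply,
    Fintype.sum_prod_type]
  simp_rw [Finset.mul_sum]
  simp_rw [Finset.sum_mul]
  simp_rw [Finset.mul_sum]
  simp_rw [Finset.sum_mul]
  refine Finset.sum_congr rfl fun p _ => ?_
  rw [sum_reorder_final (fun a c q b e =>
    Shat n k p * Shat n p a * (Shat n i q * Shat n q b * A (a, b) (c, e)
      * Shat n e q * Shat n q j) * Shat n c p * Shat n p l)]
  refine Finset.sum_congr rfl fun q _ => Finset.sum_congr rfl fun c _ =>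
    Finset.sum_congr rfl fun e _ => Finset.sum_congr rfl fun a _ =>
    Finset.sum_congr rfl fun b _ => by ring

lemma sum_sq_eq_trace {N : Type*} [Fintype N] (B : Matrix N N ℝ) :
    ∑ i, ∑ j, (B i j) ^ 2 = Matrix.trace (Bᵀ * B) := by
  rw [Matrix.trace]
  simp only [Matrix.diag_apply, Matrix.mul_apply, Matrix.transpose_apply]
  rw [Finset.sum_comm]
  refine Finset.sum_congr rfl fun i _ => Finset.sum_congr rfl fun j _ => by ring

lemma frob_conj {N : Type*} [Fintype N] [DecidableEq N] (U X : Matrix N N ℝ)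
    (hU : U * U = 1) (hUt : Uᵀ = U) : frob (U * X * U) = frob X := by
  unfold frob
  congr 1
  rw [sum_sq_eq_trace, sum_sq_eq_trace]
  rw [Matrix.transpose_mul, Matrix.transpose_mul, hUt]
  have h1 : U * (Xᵀ * U) * (U * X * U) = U * (Xᵀ * X) * U := by
    simp only [← Matrix.mul_assoc]
    rw [Matrix.mul_assoc (U * Xᵀ) U U, hU, Matrix.mul_one]
  rw [h1, Matrix.trace_mul_comm (U * (Xᵀ * X)) U, ← Matrix.mul_assoc, ← Matrix.mul_assoc,
    hU, Matrix.one_mul]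

lemma frob_diag_min {N : Type*} [Fintype N] [DecidableEq N] (W : Matrix N N ℝ) (d : N → ℝ) :
    frob (Matrix.diagonal (Matrix.diag W) - W) ≤ frob (Matrix.diagonal d - W) := by
  apply Real.sqrt_le_sqrt
  refine Finset.sum_le_sum fun i _ => Finset.sum_le_sum fun j _ => ?_
  by_cases h : i = j
  · subst h
    rw [Matrix.sub_apply, Matrix.sub_apply, Matrix.diagonal_apply_eq, Matrix.diagonal_apply_eq,
      Matrix.diag_apply, sub_self]
    simpa using sq_nonneg (d i - W i i)
  · rw [Matrix.sub_apply, Matrix.sub_apply, Matrix.diagonal_apply_ne _ h,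
      Matrix.diagonal_apply_ne _ h]

end Aux

/-- `ŝ₂(A)` is the Frobenius-optimal approximation of `A` from the tensor
algebra `{(Ŝ_n ⊗ Ŝ_n) Λ (Ŝ_n ⊗ Ŝ_n) : Λ real diagonal of order n²}`: it belongs to the
algebra and minimizes the Frobenius distance to `A` over it. -/
theorem sHat2_optimal (n : ℕ) (hn : 3 ≤ n) (A : Matrix (Fin n × Fin n) (Fin n × Fin n) ℝ) :
    (∃ d : Fin n × Fin n → ℝ,
        sHat2 A = (Shat n ⊗ₖ Shat n) * Matrix.diagonal d * (Shat n ⊗ₖ Shat n)) ∧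
      ∀ d : Fin n × Fin n → ℝ,
        frob (sHat2 A - A)
          ≤ frob ((Shat n ⊗ₖ Shat n) * Matrix.diagonal d * (Shat n ⊗ₖ Shat n) - A) := by
  have hSt : (Shat n)ᵀ = Shat n := Shat_symm n hn
  have hSS : Shat n * Shat n = 1 := Shat_mul_self n hn
  have hUt : (Shat n ⊗ₖ Shat n)ᵀ = Shat n ⊗ₖ Shat n := by
    rw [← Matrix.kroneckerMap_transpose, hSt]
  have hU : (Shat n ⊗ₖ Shat n) * (Shat n ⊗ₖ Shat n) = 1 := by
    rw [← Matrix.mul_kronecker_mul, hSS, Matrix.one_kronecker_one]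
  constructor
  · exact ⟨Matrix.diag ((Shat n ⊗ₖ Shat n) * A * (Shat n ⊗ₖ Shat n)), sHat2_eq n A⟩
  · intro d
    rw [sHat2_eq n A]
    set U := Shat n ⊗ₖ Shat n with hUdef
    have hA : U * (U * A * U) * U = A := by
      have h1 : U * (U * A * U) * U = U * U * A * (U * U) := by
        simp only [Matrix.mul_assoc]
      rw [h1, hU, Matrix.one_mul, Matrix.mul_one]
    have key : ∀ f : (Fin n × Fin n) → ℝ,
        U * Matrix.diagonal f * U - A = U * (Matrix.diagonal f - U * A * U) * U := by
      intro f
      rw [Matrix.mul_sub, Matrix.sub_mul, hA]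
    rw [key, key d, frob_conj U _ hU hUt, frob_conj U _ hU hUt]
    exact frob_diag_min (U * A * U) d
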